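/- Let φ be the flow of a smooth vector field F on ℝ^3, let C be a compact set, and suppose every forward trajectory starting in C leaves C in finite time, with the exit time function bounded above by some τ > 0 uniformly on C. Let r : D → ℝ^3 be a continuous injective map parameterizing an inflow curve in ∂C. Then the set S = {φ_t(r(d)) : d ∈ D, t ≥ 0, φ_s(r(d)) ∈ C for all s ∈ [0,t]} is a well-defined compact subset of C, and it is locally invariant: for any p ∈ S not on ∂C, trajectories through p remain in S until they reach ∂C. -/

import Mathlib

open Set Metric Real

lemma flow_joint_continuousOn
    (F : ℝ × ℝ × ℝ → ℝ × ℝ × ℝ) (hF : ContDiff ℝ (⊤ : ℕ∞) F)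
    (φ : ℝ → (ℝ × ℝ × ℝ) → ℝ × ℝ × ℝ)
    (hφ0 : ∀ p, φ 0 p = p)
    (hφode : ∀ t p, HasDerivAt (fun s => φ s p) (F (φ t p)) t) :
    ContinuousOn (fun q : (ℝ × ℝ × ℝ) × ℝ => φ q.2 q.1) (Set.univ ×ˢ Set.Ici 0) := by
  have hfc : ∀ p, Continuous (fun s => φ s p) := fun p =>
    continuous_iff_continuousAt.mpr fun s => (hφode s p).continuousAt
  rintro ⟨p₀, t₀⟩ ⟨-, ht₀ : (0:ℝ) ≤ t₀⟩
  set T : ℝ := t₀ + 1 with hT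
  have hT0 : 0 < T := by linarith
  -- bound the trajectory of p₀ on [0,T]
  obtain ⟨M, hM⟩ : ∃ M, ∀ s ∈ Icc (0:ℝ) T, ‖φ s p₀‖ ≤ M := by
    obtain ⟨M, hM⟩ := (isCompact_Icc (a := (0:ℝ)) (b := T)).exists_bound_of_continuousOn
      (hfc p₀).continuousOn
    exact ⟨M, hM⟩
  have hM0 : 0 ≤ M := le_trans (norm_nonneg _) (hM 0 ⟨le_rfl, hT0.le⟩)
  set R : ℝ := M + 1 with hR
  -- Lipschitz constant on the closed ball of radius R
  obtain ⟨K, hK⟩ : ∃ K : NNReal, LipschitzOnWith K F (closedBall (0 : ℝ × ℝ × ℝ) R) := by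
    obtain ⟨L, hL⟩ := (isCompact_closedBall (0 : ℝ × ℝ × ℝ) R).exists_bound_of_continuousOn
      (hF.continuous_fderiv (by simp)).continuousOn
    refine ⟨L.toNNReal, (convex_closedBall _ _).lipschitzOnWith_of_nnnorm_fderiv_le
      (fun x _ => (hF.differentiable (by simp)).differentiableAt) (fun x hx => ?_)⟩
    rw [← NNReal.coe_le_coe, coe_nnnorm, Real.coe_toNNReal']
    exact le_max_of_le_left (hL x hx)
  set Cst : ℝ := exp ((K : ℝ) * T) with hCst
  have hCst1 : 1 ≤ Cst := by
    rw [hCst]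
    exact one_le_exp (by positivity)
  have hCst0 : 0 < Cst := lt_of_lt_of_le one_pos hCst1
  set δ₀ : ℝ := (1 / 2) / Cst with hδ₀
  have hδ₀pos : 0 < δ₀ := by positivity
  -- key continuous dependence estimate
  have key : ∀ p, dist p p₀ ≤ δ₀ → ∀ s ∈ Icc (0:ℝ) T,
      dist (φ s p) (φ s p₀) ≤ dist p p₀ * Cst := by
    intro p hp
    set f : ℝ → ℝ × ℝ × ℝ := fun s => φ s p₀ with hf
    set g : ℝ → ℝ × ℝ × ℝ := fun s => φ s p with hg
    have hd0 : dist (g 0) (f 0) = dist p p₀ := by simp [hf, hg, hφ0]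
    set E : Set ℝ := {s | s ∈ Icc (0:ℝ) T ∧ ∀ u ∈ Icc (0:ℝ) s, dist (g u) (f u) ≤ 1} with hE
    have hδ₀le1 : δ₀ ≤ 1 := by
      rw [hδ₀]
      rw [div_le_one hCst0]
      linarith
    have h0E : (0:ℝ) ∈ E := by
      refine ⟨⟨le_rfl, hT0.le⟩, fun u hu => ?_⟩
      have : u = 0 := le_antisymm hu.2 hu.1
      subst this
      rw [hd0]
      exact hp.trans hδ₀le1
    have hEne : E.Nonempty := ⟨0, h0E⟩
    have hEbdd : BddAbove E := ⟨T, fun x hx => hx.1.2⟩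
    set σ : ℝ := sSup E with hσ
    have hσ0 : 0 ≤ σ := le_csSup hEbdd h0E
    have hσT : σ ≤ T := csSup_le hEne fun x hx => hx.1.2
    -- the trajectory of p stays within 1 of f on [0, σ]
    have hdistσ : ∀ u ∈ Icc (0:ℝ) σ, dist (g u) (f u) ≤ 1 := by
      intro u hu
      rcases eq_or_lt_of_le hu.2 with hueq | huσ
      · -- u = σ : by closedness
        have hsub : Ico (0:ℝ) u ⊆ {s | dist (g s) (f s) ≤ 1} := by
          intro w hw
          obtain ⟨b, hbE, hwb⟩ := exists_lt_of_lt_csSup hEne (hueq ▸ hw.2)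
          exact hbE.2 w ⟨hw.1, hwb.le⟩
        rcases eq_or_lt_of_le hu.1 with hu0 | hu0
        · rw [← hu0, hd0]; exact hp.trans hδ₀le1
        · have hclosed : IsClosed {s | dist (g s) (f s) ≤ 1} :=
            isClosed_le (by fun_prop) continuous_const
          have hmem : u ∈ closure (Ico (0:ℝ) u) := by
            rw [closure_Ico (ne_of_lt hu0)]
            exact ⟨hu.1, le_rfl⟩
          exact hclosed.closure_subset ((closure_mono hsub) hmem)
      · obtain ⟨b, hbE, hub⟩ := exists_lt_of_lt_csSup hEne huσ
        exact hbE.2 u ⟨hu.1, hub.le⟩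
    -- Gronwall estimate on [0, b] for any b ∈ E
    have gron : ∀ b ∈ E, ∀ s ∈ Icc (0:ℝ) b, dist (g s) (f s) ≤ dist p p₀ * exp ((K:ℝ) * s) := by
      intro b hbE s hs
      have := dist_le_of_trajectories_ODE_of_mem
        (v := fun _ => F) (s := fun _ => closedBall (0 : ℝ × ℝ × ℝ) R) (K := K)
        (fun _ _ => hK)
        ((hfc p).continuousOn (s := Icc 0 b))
        (fun u _ => (hφode u p).hasDerivWithinAt)
        (fun u hu => by
          have hu' : u ∈ Icc (0:ℝ) b := ⟨hu.1, hu.2.le⟩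
          have h1 : dist (g u) (f u) ≤ 1 :=
            hbE.2 u hu'
          have h2 : ‖f u‖ ≤ M := hM u ⟨hu.1, hu'.2.trans hbE.1.2⟩
          rw [mem_closedBall, dist_zero_right]
          calc ‖g u‖ ≤ dist (g u) (f u) + ‖f u‖ := by
                rw [dist_eq_norm]
                simpa using norm_add_le (g u - f u) (f u)
            _ ≤ 1 + M := add_le_add h1 h2
            _ = R := by rw [hR]; ring)
        ((hfc p₀).continuousOn (s := Icc 0 b))
        (fun u _ => (hφode u p₀).hasDerivWithinAt)
        (fun u hu => by
          rw [mem_closedBall, dist_zero_right]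
          have h2 : ‖f u‖ ≤ M := hM u ⟨hu.1, hu.2.le.trans hbE.1.2⟩
          rw [hR]; linarith)
        (le_of_eq hd0) s hs
      simpa using this
    -- σ belongs to E
    have hσE : σ ∈ E := ⟨⟨hσ0, hσT⟩, hdistσ⟩
    -- σ = T
    have hσeq : σ = T := by
      by_contra hne
      have hσlt : σ < T := lt_of_le_of_ne hσT hne
      -- on [0, σ] the distance is at most 1/2
      have hhalf : ∀ u ∈ Icc (0:ℝ) σ, dist (g u) (f u) ≤ 1 / 2 := by
        intro u hu
        calc dist (g u) (f u) ≤ dist p p₀ * exp ((K:ℝ) * u) := gron σ hσE u hu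
          _ ≤ δ₀ * Cst := by
              apply mul_le_mul hp _ (exp_nonneg _) hδ₀pos.le
              rw [hCst]
              exact exp_le_exp.mpr (by
                have : u ≤ T := hu.2.trans hσT
                nlinarith [K.coe_nonneg])
          _ = 1 / 2 := by rw [hδ₀]; field_simp
      -- extend beyond σ using continuity
      have hcont : ContinuousAt (fun s => dist (g s) (f s)) σ := by fun_prop
      have hevent : ∀ᶠ s in nhds σ, dist (g s) (f s) < 1 :=
        hcont.eventually_lt (continuousAt_const) (by
          calc dist (g σ) (f σ) ≤ 1/2 := hhalf σ ⟨hσ0, le_rfl⟩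
            _ < 1 := by norm_num)
      obtain ⟨η, hη0, hημ⟩ := Metric.eventually_nhds_iff.mp hevent
      set b : ℝ := min (σ + η / 2) T with hb
      have hbσ : σ < b := by
        rw [hb]
        exact lt_min (by linarith) hσlt
      have hbE : b ∈ E := by
        refine ⟨⟨hσ0.trans hbσ.le, min_le_right _ _⟩, fun u hu => ?_⟩
        rcases le_or_gt u σ with h | h
        · exact (hhalf u ⟨hu.1, h⟩).trans (by norm_num)
        · refine (hημ ?_).le
          rw [Real.dist_eq, abs_of_pos (by linarith)]
          have : u ≤ σ + η / 2 := hu.2.trans (min_le_left _ _)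
          linarith
      exact absurd (le_csSup hEbdd hbE) (not_le.mpr hbσ)
    intro s hs
    calc dist (φ s p) (φ s p₀) ≤ dist p p₀ * exp ((K:ℝ) * s) := by
          apply gron σ hσE s
          rw [hσeq]; exact hs
      _ ≤ dist p p₀ * Cst := by
          apply mul_le_mul_of_nonneg_left _ dist_nonneg
          rw [hCst]
          exact exp_le_exp.mpr (by nlinarith [K.coe_nonneg, hs.2])
  -- conclude continuity within the set
  rw [Metric.continuousWithinAt_iff]
  intro ε hε
  -- continuity in time at t₀
  obtain ⟨η₁, hη₁0, hη₁⟩ := Metric.continuousAt_iff.mp ((hfc p₀).continuousAt (x := t₀))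
    (ε / 2) (by positivity)
  refine ⟨min (min δ₀ (ε / 2 / Cst)) (min η₁ 1), by positivity, ?_⟩
  rintro ⟨p, t⟩ ⟨-, ht : (0:ℝ) ≤ t⟩ hdist
  rw [Prod.dist_eq, max_lt_iff] at hdist
  obtain ⟨hdp, hdt⟩ := hdist
  have hdp1 : dist p p₀ ≤ δ₀ :=
    le_of_lt (lt_of_lt_of_le hdp ((min_le_left _ _).trans (min_le_left _ _)))
  have hdp2 : dist p p₀ < ε / 2 / Cst :=
    lt_of_lt_of_le hdp ((min_le_left _ _).trans (min_le_right _ _))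
  have hdt1 : dist t t₀ < η₁ :=
    lt_of_lt_of_le hdt ((min_le_right _ _).trans (min_le_left _ _))
  have hdt2 : t ≤ T := by
    have h1 : dist t t₀ < 1 := lt_of_lt_of_le hdt ((min_le_right _ _).trans (min_le_right _ _))
    rw [Real.dist_eq] at h1
    rw [hT]
    rcases abs_lt.mp h1 with ⟨h2, h3⟩
    linarith
  calc dist (φ t p) (φ t₀ p₀) ≤ dist (φ t p) (φ t p₀) + dist (φ t p₀) (φ t₀ p₀) :=
        dist_triangle _ _ _
    _ < ε / 2 + ε / 2 := by
        have h5 : dist (φ t p) (φ t p₀) ≤ ε / 2 :=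
          le_of_lt (lt_of_le_of_lt (key p hdp1 t ⟨ht, hdt2⟩) ((lt_div_iff₀ hCst0).mp hdp2))
        exact add_lt_add_of_le_of_lt h5 (hη₁ hdt1)
    _ = ε := by ring
/-- Sweeping an inflow boundary curve forward by the flow inside a compact region `C`, all
of whose forward trajectories leave `C` within a uniformly bounded time `τ`, produces a
well-defined compact subset `S ⊆ C` which is locally invariant: trajectories through interior
points of `S` remain in `S` as long as they stay in `C` without meeting `∂C`. -/
theorem swept_set_locally_invariant
    (F : ℝ × ℝ × ℝ → ℝ × ℝ × ℝ) (hF : ContDiff ℝ (⊤ : ℕ∞) F)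
    (φ : ℝ → (ℝ × ℝ × ℝ) → ℝ × ℝ × ℝ)
    (hφ0 : ∀ p, φ 0 p = p)
    (hφadd : ∀ s t p, φ (s + t) p = φ s (φ t p))
    (hφode : ∀ t p, HasDerivAt (fun s => φ s p) (F (φ t p)) t)
    (C : Set (ℝ × ℝ × ℝ)) (hC : IsCompact C)
    (τ : ℝ) (hτ : 0 < τ)
    (hexit : ∀ p ∈ C, ∃ t : ℝ, 0 < t ∧ t ≤ τ ∧ φ t p ∉ C)
    (D : Type*) [TopologicalSpace D] [CompactSpace D]
    (r : D → ℝ × ℝ × ℝ) (hr : Continuous r) (hrinj : Function.Injective r)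
    (hrbd : ∀ d, r d ∈ frontier C) :
    {q | ∃ d t, 0 ≤ t ∧ (∀ s ∈ Set.Icc 0 t, φ s (r d) ∈ C) ∧ q = φ t (r d)} ⊆ C ∧
    IsCompact {q | ∃ d t, 0 ≤ t ∧ (∀ s ∈ Set.Icc 0 t, φ s (r d) ∈ C) ∧ q = φ t (r d)} ∧
    (∀ p ∈ {q | ∃ d t, 0 ≤ t ∧ (∀ s ∈ Set.Icc 0 t, φ s (r d) ∈ C) ∧ q = φ t (r d)},
      p ∉ frontier C → ∀ t : ℝ, 0 ≤ t →
      (∀ s ∈ Set.Ico 0 t, φ s p ∉ frontier C) →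
      (∀ s ∈ Set.Icc 0 t, φ s p ∈ C) →
      φ t p ∈ {q | ∃ d t', 0 ≤ t' ∧ (∀ s ∈ Set.Icc 0 t', φ s (r d) ∈ C) ∧
        q = φ t' (r d)}) := by
  have hCcl : IsClosed C := hC.isClosed
  set S : Set (ℝ × ℝ × ℝ) :=
    {q | ∃ d t, 0 ≤ t ∧ (∀ s ∈ Set.Icc 0 t, φ s (r d) ∈ C) ∧ q = φ t (r d)} with hS
  -- Part 1: S ⊆ C
  have hsub : S ⊆ C := by
    rintro q ⟨d, t, ht, hall, rfl⟩
    exact hall t ⟨ht, le_rfl⟩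
  refine ⟨hsub, ?_, ?_⟩
  · -- Part 2: compactness
    have hψ := flow_joint_continuousOn F hF φ hφ0 hφode
    set Kset : Set (D × ℝ) :=
      {x | x.2 ∈ Set.Icc 0 τ ∧
        ∀ s ∈ Set.Icc (0:ℝ) τ, φ (max 0 (min s x.2)) (r x.1) ∈ C} with hKset
    have hKclosed : IsClosed Kset := by
      have h1 : Kset = (Prod.snd ⁻¹' Set.Icc 0 τ) ∩
          ⋂ s ∈ Set.Icc (0:ℝ) τ,
            (fun x : D × ℝ => φ (max 0 (min s x.2)) (r x.1)) ⁻¹' C := by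
        ext x
        simp only [hKset, Set.mem_setOf_eq, Set.mem_inter_iff, Set.mem_preimage,
          Set.mem_iInter]
        try tauto
      rw [h1]
      refine (isClosed_Icc.preimage continuous_snd).inter (isClosed_biInter fun s hs => ?_)
      have hc : Continuous fun x : D × ℝ => φ (max 0 (min s x.2)) (r x.1) := by
        have hm : Continuous fun x : D × ℝ =>
            ((r x.1, max 0 (min s x.2)) : (ℝ × ℝ × ℝ) × ℝ) :=
          (hr.comp continuous_fst).prodMk
            (continuous_const.max (continuous_const.min continuous_snd))
        exact hψ.comp_continuous hm fun x => ⟨Set.mem_univ _, Set.mem_Ici.mpr (le_max_left _ _)⟩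
      exact hCcl.preimage hc
    have hKcpt : IsCompact Kset :=
      (isCompact_univ.prod isCompact_Icc).of_isClosed_subset hKclosed
        (fun x hx => ⟨Set.mem_univ _, hx.1⟩)
    have himg : S = (fun x : D × ℝ => φ x.2 (r x.1)) '' Kset := by
      ext q
      constructor
      · rintro ⟨d, t, ht, hall, rfl⟩
        have hrdC : r d ∈ C := by
          have := hall 0 ⟨le_rfl, ht⟩
          rwa [hφ0] at this
        have htτ : t ≤ τ := by
          by_contra hgt
          push_neg at hgt
          obtain ⟨t', ht'0, ht'τ, ht'out⟩ := hexit (r d) hrdC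
          exact ht'out (hall t' ⟨ht'0.le, by linarith⟩)
        refine ⟨(d, t), ⟨⟨ht, htτ⟩, fun s hs => ?_⟩, rfl⟩
        exact hall _ ⟨le_max_left _ _, max_le ht (min_le_right _ _)⟩
      · rintro ⟨⟨d, t⟩, ⟨htI, hall⟩, rfl⟩
        refine ⟨d, t, htI.1, fun s hs => ?_, rfl⟩
        have h1 := hall s ⟨hs.1, hs.2.trans htI.2⟩
        rwa [min_eq_left hs.2, max_eq_right hs.1] at h1
    rw [himg]
    apply hKcpt.image_of_continuousOn
    have hcomp : ContinuousOn
        ((fun q : (ℝ × ℝ × ℝ) × ℝ => φ q.2 q.1) ∘ (fun x : D × ℝ => (r x.1, x.2))) Kset :=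
      hψ.comp ((hr.comp continuous_fst).prodMk continuous_snd).continuousOn
        (fun x (hx : x ∈ Kset) => ⟨Set.mem_univ _, hx.1.1⟩)
    exact hcomp
  · -- Part 3: local invariance
    rintro p ⟨d, t₀, ht₀, hall, rfl⟩ hpnb t ht hnof hstay
    refine ⟨d, t + t₀, by linarith, fun s hs => ?_, (hφadd t t₀ (r d)).symm⟩
    rcases le_or_gt s t₀ with h | h
    · exact hall s ⟨hs.1, h⟩
    · have heq : φ s (r d) = φ (s - t₀) (φ t₀ (r d)) := by
        rw [← hφadd]
        congr 1
        ring
      rw [heq]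
      obtain ⟨hs1, hs2⟩ := hs
      exact hstay (s - t₀) ⟨by linarith, by linarith⟩
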